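/- arXiv:1104.4441 — 3 statements merged into one kernel-verified Lean document; each statement's English description precedes it below -/
import Mathlib

section
/- Let (A,≤) be a 1-quasi-hereditary algebra and j,k ∈ Q_0. Then the Jordan–Hölder multiplicities satisfy [P(j):S(k)] = [I(j):S(k)] = |Λ^(j) ∩ Λ^(k)|. -/
open scoped Classical

noncomputable section

/-! ### Basic notions for (1-)quasi-hereditary algebras

`K` is an algebraically closed field, `A` a basic finite-dimensional `K`-algebra
with complete set of primitive orthogonal idempotents `e i` indexed by the
vertex set `ι` carrying a partial order `le`. -/

section Core

variable (K : Type) [Field K] (A : Type) [Ring A] [Algebra K A]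

/-- The `K`-linear endomorphism `m ↦ a • m` of an `A`-module `M`. -/
def hitK (a : A) (M : Type) [AddCommGroup M] [Module K M] [Module A M]
    [IsScalarTower K A M] : M →ₗ[K] M where
  toFun m := a • m
  map_add' := smul_add a
  map_smul' k m := by
    simp only [RingHom.id_apply]
    exact (smul_comm k a m).symm

/-- Jordan–Hölder multiplicity `[M : S(i)] = dim_K (e_i • M)`, which is the
correct composition multiplicity for a basic algebra over an algebraically
closed field. -/
def cmult (a : A) (M : Type) [AddCommGroup M] [Module K M] [Module A M]
    [IsScalarTower K A M] : ℕ :=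
  Module.finrank K (LinearMap.range (hitK K A a M))

/-- The radical of a module: intersection of all maximal submodules. -/
def radM (M : Type) [AddCommGroup M] [Module A M] : Submodule A M :=
  sInf {N | IsCoatom N}

/-- The socle of a module: sum of all simple submodules. -/
def socM (M : Type) [AddCommGroup M] [Module A M] : Submodule A M :=
  sSup {N | IsAtom N}

/-- The top of a module, `M / rad M`. -/
abbrev topM (M : Type) [AddCommGroup M] [Module A M] : Type := M ⧸ radM A M

variable {ι : Type}

/-- The projective indecomposable module `P(i) = A e_i`. -/
def Pmod (e : ι → A) (i : ι) : Submodule A A := Submodule.span A {e i}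

/-- The simple module `S(i) = top P(i)`. -/
abbrev Smod (e : ι → A) (i : ι) : Type := topM A ↥(Pmod A e i)

/-- The subquotient `N'/N` associated to a pair of submodules. -/
abbrev subQuot {M : Type} [AddCommGroup M] [Module A M] (N N' : Submodule A M) : Type :=
  ↥N' ⧸ Submodule.comap N'.subtype N

/-- The kernel of `P(i) ↠ Δ(i)`: the smallest submodule of `P(i)` such that all
composition factors `S(j)` of the quotient satisfy `j ≤ i`. -/
def delKer (le : ι → ι → Prop) (e : ι → A) (i : ι) : Submodule A ↥(Pmod A e i) :=
  sInf {N | ∀ j, ¬ le j i → cmult K A (e j) (↥(Pmod A e i) ⧸ N) = 0}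

/-- The standard module `Δ(i)`: the largest quotient of `P(i)` all of whose
composition factors `S(j)` satisfy `j ≤ i`. -/
abbrev Dmod (le : ι → ι → Prop) (e : ι → A) (i : ι) : Type :=
  ↥(Pmod A e i) ⧸ delKer K A le e i

/-- The costandard module `∇(i)`, as the largest submodule of (an injective
envelope) `Ii` of `S(i)` all of whose composition factors `S(j)` satisfy `j ≤ i`. -/
def nabla (le : ι → ι → Prop) (e : ι → A) (i : ι) (Ii : Type) [AddCommGroup Ii]
    [Module K Ii] [Module A Ii] [IsScalarTower K A Ii] : Submodule A Ii :=
  sSup {N | ∀ j, ¬ le j i → cmult K A (e j) ↥N = 0}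

/-- `Ii` is (a copy of) the injective indecomposable module `I(i)`:
injective with socle isomorphic to `S(i)`. -/
def IsInjEnv (e : ι → A) (i : ι) (Ii : Type) [AddCommGroup Ii] [Module A Ii] : Prop :=
  Module.Injective A Ii ∧ Nonempty (↥(socM A Ii) ≃ₗ[A] Smod A e i)

/-- `Loc_i(M)`: the set of local submodules of `M` with top isomorphic to `S(i)`,
i.e. images of nonzero homomorphisms `P(i) → M`. -/
def Loc (e : ι → A) (i : ι) (M : Type) [AddCommGroup M] [Module A M] :
    Set (Submodule A M) :=
  {N | ∃ f : ↥(Pmod A e i) →ₗ[A] M, f ≠ 0 ∧ LinearMap.range f = N}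

/-- `Loc_i(N)` for a submodule `N ≤ M`, viewed inside the ambient module `M`:
the local submodules of `M` with top `S(i)` which are contained in `N`. -/
def LocIn (e : ι → A) (i : ι) {M : Type} [AddCommGroup M] [Module A M]
    (N : Submodule A M) : Set (Submodule A M) :=
  {L | L ∈ Loc A e i M ∧ L ≤ N}

end Core

section Order

variable {ι : Type}

/-- Strict order associated to `le`. -/
def sLT (le : ι → ι → Prop) (a b : ι) : Prop := le a b ∧ a ≠ b

/-- `a ◁ b` : `a < b` and `a`, `b` are neighbours with respect to `le`. -/
def Nbr (le : ι → ι → Prop) (a b : ι) : Prop :=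
  sLT le a b ∧ ∀ c, le a c → le c b → c = a ∨ c = b

end Order

section Filtrations

variable (K : Type) [Field K] (A : Type) [Ring A] [Algebra K A] {ι : Type}

/-- A filtration of `M` by submodules all of whose subquotients are isomorphic to
members of the family `F` (e.g. a `Δ`-good or `∇`-good filtration). -/
structure GoodFilt (M : Type) [AddCommGroup M] [Module A M]
    (F : ι → ModuleCat.{0} A) : Type where
  len : ℕ
  D : Fin (len + 1) → Submodule A M
  mono : Monotone D
  first : D 0 = ⊥
  last : D (Fin.last len) = ⊤
  quotGood : ∀ t : Fin len, ∃ i : ι,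
    Nonempty (subQuot A (D t.castSucc) (D t.succ) ≃ₗ[A] ↥(F i))

end Filtrations

/-- The multiplicity `(M : F(i))` of `F i` in a good filtration: the number of
subquotients isomorphic to `F i`. -/
def GoodFilt.cnt {A : Type} [Ring A] {ι : Type} {M : Type} [AddCommGroup M]
    [Module A M] {F : ι → ModuleCat.{0} A} (fl : GoodFilt A M F) (i : ι) : ℕ :=
  Nat.card {t : Fin fl.len //
    Nonempty (subQuot A (fl.D t.castSucc) (fl.D t.succ) ≃ₗ[A] ↥(F i))}

section Filtrations
variable (K : Type) [Field K] (A : Type) [Ring A] [Algebra K A] {ι : Type}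

/-- A Jordan–Hölder filtration (composition series) of `M`. -/
structure JHFilt (M : Type) [AddCommGroup M] [Module A M] : Type where
  len : ℕ
  D : Fin (len + 1) → Submodule A M
  mono : Monotone D
  first : D 0 = ⊥
  last : D (Fin.last len) = ⊤
  simple : ∀ t : Fin len, IsSimpleModule A (subQuot A (D t.castSucc) (D t.succ))

/-- The family of standard modules, as objects of `ModuleCat A`. -/
def Dcat (le : ι → ι → Prop) (e : ι → A) : ι → ModuleCat.{0} A :=
  fun i => ModuleCat.of A (Dmod K A le e i)

/-- The family of costandard modules relative to a choice `Ifam` of injective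
envelopes, as objects of `ModuleCat A`. -/
def Ncat (le : ι → ι → Prop) (e : ι → A) (Ifam : ι → Type)
    [∀ l, AddCommGroup (Ifam l)] [∀ l, Module K (Ifam l)] [∀ l, Module A (Ifam l)]
    [∀ l, IsScalarTower K A (Ifam l)] : ι → ModuleCat.{0} A :=
  fun i => ModuleCat.of A ↥(nabla K A le e i (Ifam i))

end Filtrations

section QH

variable (K : Type) [Field K] (A : Type) [Ring A] [Algebra K A]
variable {ι : Type} [Fintype ι]

/-- `A` (given by the complete set `e` of primitive orthogonal idempotents of a
basic algebra, and the partial order `le` on the vertex set `ι`) is a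
1-quasi-hereditary algebra. -/
structure OneQH (le : ι → ι → Prop) (e : ι → A) : Prop where
  /- finite dimensional algebra -/
  fd : FiniteDimensional K A
  /- `le` is a partial order on the vertex set -/
  le_refl : ∀ i, le i i
  le_trans : ∀ i j k, le i j → le j k → le i k
  le_antisymm : ∀ i j, le i j → le j i → i = j
  /- `e` is a complete set of primitive orthogonal idempotents, `A` basic -/
  idem : ∀ i, e i * e i = e i
  orth : ∀ i j, i ≠ j → e i * e j = 0
  sum_one : ∑ i, e i = 1
  simple : ∀ i, IsSimpleModule A (Smod A e i)
  basic : ∀ i j, Nonempty (Smod A e i ≃ₗ[A] Smod A e j) → i = j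
  allSimple : ∀ (M : Type) [AddCommGroup M] [Module A M], IsSimpleModule A M →
      ∃ i, Nonempty (M ≃ₗ[A] Smod A e i)
  /- (1) there is a smallest and a largest element -/
  ex_min : ∃ m, ∀ i, le m i
  ex_max : ∃ m, ∀ i, le i m
  /- quasi-heredity and axiom (2): `[Δ(i):S(j)] = (P(j):Δ(i)) = 1` for `j ≤ i`,
     and `(P(j):Δ(i)) = 0` unless `i ≥ j` -/
  delta_mult : ∀ i j, le j i → cmult K A (e j) (Dmod K A le e i) = 1
  pgood : ∀ j, Nonempty (GoodFilt A ↥(Pmod A e j) (Dcat K A le e))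
  pmult_one : ∀ j i, le j i →
      ∀ fl : GoodFilt A ↥(Pmod A e j) (Dcat K A le e), fl.cnt i = 1
  pmult_zero : ∀ j i, ¬ le j i →
      ∀ fl : GoodFilt A ↥(Pmod A e j) (Dcat K A le e), fl.cnt i = 0
  /- (3) `soc P(j) ≅ S(min)` and `top I(j) ≅ S(min)` -/
  soc_p : ∀ m, (∀ i, le m i) → ∀ j,
      Nonempty (↥(socM A ↥(Pmod A e j)) ≃ₗ[A] Smod A e m)
  top_i : ∀ m, (∀ i, le m i) → ∀ j, ∀ (Ij : Type) [AddCommGroup Ij] [Module K Ij]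
      [Module A Ij] [IsScalarTower K A Ij], IsInjEnv A e j Ij →
      Nonempty (topM A Ij ≃ₗ[A] Smod A e m)
  /- (4) `Δ(i) ↪ Δ(max)` and `∇(max) ↠ ∇(i)` -/
  delta_emb : ∀ mx, (∀ i, le i mx) → ∀ i,
      ∃ f : Dmod K A le e i →ₗ[A] Dmod K A le e mx, Function.Injective f
  nabla_surj : ∀ mx, (∀ i, le i mx) → ∀ i,
      ∀ (Imx Ii : Type) [AddCommGroup Imx] [Module K Imx] [Module A Imx]
        [IsScalarTower K A Imx] [AddCommGroup Ii] [Module K Ii] [Module A Ii]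
        [IsScalarTower K A Ii],
      IsInjEnv A e mx Imx → IsInjEnv A e i Ii →
      ∃ g : ↥(nabla K A le e mx Imx) →ₗ[A] ↥(nabla K A le e i Ii),
        Function.Surjective g

end QH
section Quiver

/-- Paths in a quiver with vertex set `ι` and arrow sets `Arr a b`. -/
inductive PathIn {ι : Type} (Arr : ι → ι → Type) : ι → ι → Type
  | nil (a : ι) : PathIn Arr a a
  | cons {a b c : ι} (p : PathIn Arr a b) (α : Arr b c) : PathIn Arr a c

variable {ι : Type} {Arr : ι → ι → Type}

/-- Evaluation of a path in an algebra `A`, given the images `e` of the trivial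
paths and `arr` of the arrows.  A path `a → ⋯ → b` lands in `e b * A * e a`. -/
def PathIn.eval (A : Type) [Ring A] (e : ι → A) (arr : ∀ a b : ι, Arr a b → A) :
    ∀ {a b : ι}, PathIn Arr a b → A
  | _, _, .nil a => e a
  | _, _, .cons (b := b) (c := c) p α => arr b c α * PathIn.eval A e arr p

/-- A path is increasing with respect to the strict relation `lt`. -/
def PathIn.Up (lt : ι → ι → Prop) : ∀ {a b : ι}, PathIn Arr a b → Prop
  | _, _, .nil _ => True
  | _, _, .cons (b := b) (c := c) p _ => PathIn.Up lt p ∧ lt b c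

/-- Concatenation of paths. -/
def PathIn.comp {a b c : ι} (p : PathIn Arr a b) : PathIn Arr b c → PathIn Arr a c
  | .nil _ => p
  | .cons q α => .cons (p.comp q) α

/-- A path `p` from `j` to `k` is of the form `p(j,i,k)`: an increasing path from
`j` to `i` followed by a decreasing path from `i` to `k`
(`j = j₁ < ⋯ < jₘ < i > k₁ > ⋯ > kᵣ = k`). -/
def IsHook (le : ι → ι → Prop) {j k : ι} (i : ι) (p : PathIn Arr j k) : Prop :=
  ∃ (p₁ : PathIn Arr j i) (p₂ : PathIn Arr i k),
    p₁.Up (sLT le) ∧ p₂.Up (fun a b => sLT le b a) ∧ p = p₁.comp p₂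

/-- The evaluation of a path starting at `j` lies in `P(j) = A e_j`. -/
lemma eval_mem_Pmod (A : Type) [Ring A] (e : ι → A) (arr : ∀ a b : ι, Arr a b → A)
    {j k : ι} (p : PathIn Arr j k) : PathIn.eval A e arr p ∈ Pmod A e j := by
  induction p with
  | nil =>
      simp only [PathIn.eval, Pmod]
      exact Submodule.mem_span_singleton_self _
  | cons p α ih =>
      simp only [PathIn.eval]
      simpa [smul_eq_mul] using Submodule.smul_mem _ (arr _ _ α) ih

end Quiver
section Factor

variable (K : Type) [Field K] (A : Type) [Ring A] [Algebra K A] {ι : Type}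

/-- The two-sided ideal `J(i) = A (∑_{l ∉ Λ_(i)} e_l) A` (as a left submodule of
`A`; it is closed under right multiplication). -/
def Jset (le : ι → ι → Prop) (e : ι → A) (i : ι) : Submodule A A :=
  Submodule.span A {x | ∃ l b, ¬ le l i ∧ x = e l * b}

/-- The ring congruence associated to the two-sided ideal `J(i)`. -/
def Jcon (le : ι → ι → Prop) (e : ι → A) (i : ι) : RingCon A :=
  ringConGen (fun a b => a - b ∈ Jset A le e i)

/-- The factor algebra `A(i) = A / J(i)`. -/
abbrev Afac (le : ι → ι → Prop) (e : ι → A) (i : ι) : Type := (Jcon A le e i).Quotient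

noncomputable instance (le : ι → ι → Prop) (e : ι → A) (i : ι) :
    Algebra K (Afac A le e i) :=
  RingHom.toAlgebra' ((Jcon A le e i).mk'.comp (algebraMap K A)) (by
    intro k x
    induction x using Quot.ind with
    | _ a =>
      show (Jcon A le e i).mk' (algebraMap K A k) * (Jcon A le e i).mk' a =
        (Jcon A le e i).mk' a * (Jcon A le e i).mk' (algebraMap K A k)
      rw [← map_mul, ← map_mul, Algebra.commutes])

/-- A module is annihilated by (the left ideal) `Jd`, i.e. it is a module over
the factor algebra `A/Jd`. -/
def KilledBy (Jd : Submodule A A) (M : Type) [AddCommGroup M] [Module A M] : Prop :=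
  ∀ x ∈ Jd, ∀ m : M, x • m = 0

/-- `M` is an injective object in the category of `A`-modules annihilated by the
two-sided ideal `Jd`, i.e. an injective `A/Jd`-module. -/
def RelInjective (Jd : Submodule A A) (M : Type) [AddCommGroup M] [Module A M] : Prop :=
  ∀ (X Y : Type) [AddCommGroup X] [Module A X] [AddCommGroup Y] [Module A Y],
    KilledBy A Jd X → KilledBy A Jd Y →
    ∀ (f : X →ₗ[A] Y), Function.Injective f →
    ∀ (g : X →ₗ[A] M), ∃ h : Y →ₗ[A] M, ∀ x, h (f x) = g x

/-- `M` is indecomposable (and nonzero). -/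
def Indecomp (M : Type) [AddCommGroup M] [Module A M] : Prop :=
  (⊤ : Submodule A M) ≠ ⊥ ∧
  ∀ N N' : Submodule A M, IsCompl N N' → N = ⊥ ∨ N' = ⊥

/-- `T` is (a copy of) the indecomposable direct summand `T(i)` of the
characteristic tilting module: the unique indecomposable module which is both
`Δ`-good and `∇`-good, with `(T(i):Δ(j)) = (T(i):∇(j)) = 0` for `j ≰ i` and
`(T(i):Δ(i)) = (T(i):∇(i)) = 1`; here the costandard modules are computed inside
a chosen family `Ifam` of injective envelopes. -/
def IsTiltSummand (le : ι → ι → Prop) (e : ι → A) (Ifam : ι → Type)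
    [∀ l, AddCommGroup (Ifam l)] [∀ l, Module K (Ifam l)] [∀ l, Module A (Ifam l)]
    [∀ l, IsScalarTower K A (Ifam l)] (i : ι) (T : Type) [AddCommGroup T]
    [Module A T] : Prop :=
  Indecomp A T ∧
  Nonempty (GoodFilt A T (Dcat K A le e)) ∧
  Nonempty (GoodFilt A T (Ncat K A le e Ifam)) ∧
  (∀ j, ¬ le j i →
    (∀ fl : GoodFilt A T (Dcat K A le e), fl.cnt j = 0) ∧
    (∀ fl : GoodFilt A T (Ncat K A le e Ifam), fl.cnt j = 0)) ∧
  (∀ fl : GoodFilt A T (Dcat K A le e), fl.cnt i = 1) ∧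
  (∀ fl : GoodFilt A T (Ncat K A le e Ifam), fl.cnt i = 1)

end Factor
section FreeAlg

variable (K : Type) [Field K] {ι : Type} (Arr : ι → ι → Type)

/-- The free `K`-algebra on the vertices and arrows of the quiver;
the path algebra `KQ` is its quotient by the quiver relations `quiverRels`. -/
abbrev FreeQ : Type := FreeAlgebra K (ι ⊕ Σ a : ι, Σ b : ι, Arr a b)

/-- The generator corresponding to the trivial path at a vertex. -/
def genV (i : ι) : FreeQ K Arr := FreeAlgebra.ι K (Sum.inl i)

/-- The generator corresponding to an arrow. -/
def genA (a b : ι) (α : Arr a b) : FreeQ K Arr := FreeAlgebra.ι K (Sum.inr ⟨a, b, α⟩)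

/-- The defining relations of the path algebra `KQ` as a quotient of the free
algebra on vertices and arrows: the `e_i` are orthogonal idempotents summing to
`1`, and `e_b · α · e_a = α` for an arrow `α : a → b`. -/
def quiverRels [Fintype ι] : Set (FreeQ K Arr) :=
  {x | ∃ i, x = genV K Arr i * genV K Arr i - genV K Arr i} ∪
  {x | ∃ i j, i ≠ j ∧ x = genV K Arr i * genV K Arr j} ∪
  {x | x = 1 - ∑ i : ι, genV K Arr i} ∪
  {x | ∃ a b α, x = genV K Arr b * genA K Arr a b α * genV K Arr a - genA K Arr a b α}

variable (A : Type) [Ring A] [Algebra K A]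

/-- The canonical map from the free algebra on vertices and arrows to `A`,
sending the vertex generators to the idempotents `e i` and the arrow generators
to the chosen arrow elements of `A`. -/
def toA (e : ι → A) (arr : ∀ a b : ι, Arr a b → A) : FreeQ K Arr →ₐ[K] A :=
  FreeAlgebra.lift K (fun g => Sum.rec (fun i => e i) (fun s => arr s.1 s.2.1 s.2.2) g)

/-- The two-sided ideal generated by a subset of a (noncommutative) ring,
as a left ideal. -/
def tsSpan (R : Type) [Ring R] (S : Set R) : Ideal R :=
  Ideal.span {x | ∃ r ∈ S, ∃ y, x = r * y}

end FreeAlg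

/-! Both multiplicities are dimensions of Hom spaces: for the idempotent `e k`,
`[M : S(k)] = dim_K (e_k M) = dim_K Hom(P(k), M)`, and `M ↦ e_k M` is exact.
Along a `Δ`-filtration of `P(j)` each `Δ(i)` with `j ≤ i` occurs exactly once and contributes
`[Δ(i) : S(k)]`, which is `1` if `k ≤ i` and `0` otherwise; this gives
`[P(j) : S(k)] = |Λ^(j) ∩ Λ^(k)|`.
For the injective module `I(j)`, `M ↦ dim_K Hom(M, I(j))` is additive on short exact sequences
and agrees with `[S : S(j)]` on simple `S`, because every map `S → I(j)` lands in
`soc I(j) ≅ S(j)`. Hence `[I(j) : S(k)] = dim_K Hom(P(k), I(j)) = [P(k) : S(j)]`, and the first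
part applies with `j` and `k` exchanged. -/

theorem rank_eq_add_of_exact {K X Y Z : Type} [Field K] [AddCommGroup X] [Module K X]
    [AddCommGroup Y] [Module K Y] [AddCommGroup Z] [Module K Z] {f : X →ₗ[K] Y}
    {g : Y →ₗ[K] Z} (hf : Function.Injective f) (hfg : Function.Exact f g)
    (hg : Function.Surjective g) : Module.rank K Y = Module.rank K X + Module.rank K Z := by
  rw [← g.rank_range_add_rank_ker, LinearMap.range_eq_top.2 hg, rank_top,
    hfg.linearMap_ker_eq, rank_range_of_injective f hf, add_comm]

theorem finrank_eq_add_of_exact {K X Y Z : Type} [Field K] [AddCommGroup X] [Module K X]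
    [AddCommGroup Y] [Module K Y] [AddCommGroup Z] [Module K Z] [FiniteDimensional K Y]
    {f : X →ₗ[K] Y} {g : Y →ₗ[K] Z} (hf : Function.Injective f) (hfg : Function.Exact f g)
    (hg : Function.Surjective g) :
    Module.finrank K Y = Module.finrank K X + Module.finrank K Z := by
  have : FiniteDimensional K X := .of_injective f hf
  have : FiniteDimensional K Z := .of_surjective g hg
  have := rank_eq_add_of_exact hf hfg hg
  rw [← Module.finrank_eq_rank, ← Module.finrank_eq_rank, ← Module.finrank_eq_rank] at this
  exact_mod_cast this

namespace LinearMap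

theorem exact_lcomp_of_exact_of_surjective' {R S M₁ M₂ M₃ : Type} (N : Type) [Ring R]
    [Semiring S] [AddCommGroup M₁] [AddCommGroup M₂] [AddCommGroup M₃] [AddCommGroup N]
    [Module R M₁] [Module R M₂] [Module R M₃] [Module R N] [Module S N] [SMulCommClass R S N]
    {f : M₁ →ₗ[R] M₂} {g : M₂ →ₗ[R] M₃} (hfg : Function.Exact f g)
    (hg : Function.Surjective g) : Function.Exact (lcomp S N g) (lcomp S N f) := by
  intro φ
  simp only [lcomp_apply', Set.mem_range]
  refine ⟨fun hφ ↦ ?_, fun ⟨y, hy⟩ ↦ ?_⟩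
  · use ((range f).liftQ φ (range_le_ker_iff.mpr hφ)).comp
      (hfg.linearEquivOfSurjective hg).symm.toLinearMap
    ext x
    simp
  · rw [← hy, comp_assoc, hfg.linearMap_comp_eq_zero, comp_zero y]

end LinearMap

section Hit

variable {K A : Type} [Field K] [Ring A] [Algebra K A]
  {M N Q : Type} [AddCommGroup M] [Module K M] [Module A M] [IsScalarTower K A M]
  [AddCommGroup N] [Module K N] [Module A N] [IsScalarTower K A N]
  [AddCommGroup Q] [Module K Q] [Module A Q] [IsScalarTower K A Q]

instance Submodule.finiteDimensional_of_tower [FiniteDimensional K M] (P : Submodule A M) :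
    FiniteDimensional K P :=
  inferInstanceAs (FiniteDimensional K (P.restrictScalars K))

/-- The functor `M ↦ a • M` on morphisms. -/
def hitKRange (a : A) (f : M →ₗ[A] N) :
    LinearMap.range (hitK K A a M) →ₗ[K] LinearMap.range (hitK K A a N) :=
  (f.restrictScalars K).restrict fun _ ⟨m, hm⟩ => ⟨f m, by rw [← hm]; exact (f.map_smul a m).symm⟩

variable (a : A)

theorem hitKRange_injective {f : M →ₗ[A] N} (hf : Function.Injective f) :
    Function.Injective (hitKRange (K := K) a f) := fun _ _ hxy =>
  Subtype.ext (hf (congrArg Subtype.val hxy))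

theorem hitKRange_surjective {f : M →ₗ[A] N} (hf : Function.Surjective f) :
    Function.Surjective (hitKRange (K := K) a f) := by
  rintro ⟨_, n, rfl⟩
  obtain ⟨m, rfl⟩ := hf n
  exact ⟨⟨a • m, m, rfl⟩, Subtype.ext (f.map_smul a m)⟩

theorem hitKRange_exact {a : A} (ha : IsIdempotentElem a) {f : M →ₗ[A] N} {g : N →ₗ[A] Q}
    (hfg : Function.Exact f g) : Function.Exact (hitKRange (K := K) a f) (hitKRange a g) := by
  rintro ⟨_, n, rfl⟩
  constructor
  · intro h
    obtain ⟨m, hm⟩ := (hfg (a • n)).1 (congrArg Subtype.val h)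
    refine ⟨⟨a • m, m, rfl⟩, Subtype.ext ?_⟩
    show f (a • m) = a • n
    rw [f.map_smul, hm, ← mul_smul, ha.eq]
  · rintro ⟨⟨_, m, rfl⟩, hm⟩
    rw [← hm]
    exact Subtype.ext (hfg.apply_apply_eq_zero _)

theorem cmult_congr (f : M ≃ₗ[A] N) : cmult K A a M = cmult K A a N :=
  (LinearEquiv.ofBijective (hitKRange a f.toLinearMap)
    ⟨hitKRange_injective a f.injective, hitKRange_surjective a f.surjective⟩).finrank_eq

theorem cmult_eq_add_of_exact {a : A} (ha : IsIdempotentElem a) [FiniteDimensional K N]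
    {f : M →ₗ[A] N} {g : N →ₗ[A] Q} (hf : Function.Injective f) (hfg : Function.Exact f g)
    (hg : Function.Surjective g) : cmult K A a N = cmult K A a M + cmult K A a Q :=
  finrank_eq_add_of_exact (hitKRange_injective a hf) (hitKRange_exact ha hfg)
    (hitKRange_surjective a hg)

theorem cmult_eq_add {a : A} (ha : IsIdempotentElem a) [FiniteDimensional K M]
    (P : Submodule A M) : cmult K A a M = cmult K A a P + cmult K A a (M ⧸ P) :=
  cmult_eq_add_of_exact ha P.injective_subtype (LinearMap.exact_subtype_mkQ P) P.mkQ_surjective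

theorem cmult_eq_zero_of_subsingleton [Subsingleton M] : cmult K A a M = 0 :=
  Module.finrank_zero_of_subsingleton

theorem cmult_eq_zero_iff [FiniteDimensional K M] :
    cmult K A a M = 0 ↔ ∀ m : M, a • m = 0 := by
  rw [cmult, Submodule.finrank_eq_zero, LinearMap.range_eq_bot, LinearMap.ext_iff]
  rfl

end Hit

section Multiplicity

variable {K A : Type} [Field K] [Ring A] [Algebra K A]
  {M : Type} [AddCommGroup M] [Module K M] [Module A M] [IsScalarTower K A M]

theorem cmult_eq_sum_of_filtration {a : A} (ha : IsIdempotentElem a) [FiniteDimensional K M]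
    {n : ℕ} (D : Fin (n + 1) → Submodule A M) (mono : Monotone D) (first : D 0 = ⊥)
    (last : D (Fin.last n) = ⊤) :
    cmult K A a M = ∑ t : Fin n, cmult K A a (subQuot A (D t.castSucc) (D t.succ)) := by
  have partial_sum : ∀ t : Fin (n + 1), cmult K A a (D t) =
      ∑ s : Fin n with s.castSucc < t, cmult K A a (subQuot A (D s.castSucc) (D s.succ)) := by
    intro t
    induction t using Fin.induction with
    | zero =>
      rw [cmult_congr a (LinearEquiv.ofEq _ _ first), cmult_eq_zero_of_subsingleton]
      simp
    | succ t ih =>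
      have hle : D t.castSucc ≤ D t.succ := mono (Fin.castSucc_le_succ t)
      have hsplit : Finset.univ.filter (fun s : Fin n => s.castSucc < t.succ) =
          insert t (Finset.univ.filter fun s => s.castSucc < t.castSucc) := by
        ext s
        simp [Fin.castSucc_lt_succ_iff, le_iff_lt_or_eq, or_comm]
      rw [cmult_eq_add ha (Submodule.comap (D t.succ).subtype (D t.castSucc)),
        cmult_congr a (Submodule.comapSubtypeEquivOfLe hle), ih, hsplit,
        Finset.sum_insert (by simp), add_comm]
  rw [← cmult_congr a ((LinearEquiv.ofEq _ _ last).trans Submodule.topEquiv), partial_sum]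
  simp [Fin.castSucc_lt_last]

theorem smul_hom_span_apply_self {a : A} (ha : IsIdempotentElem a)
    (f : Submodule.span A {a} →ₗ[A] M) :
    a • f ⟨a, Submodule.mem_span_singleton_self a⟩ =
      f ⟨a, Submodule.mem_span_singleton_self a⟩ := by
  rw [← f.map_smul]
  exact congrArg f (Subtype.ext ha.eq)

def homSpanEquivRangeHitK {a : A} (ha : IsIdempotentElem a) :
    (Submodule.span A {a} →ₗ[A] M) ≃ₗ[K] LinearMap.range (hitK K A a M) where
  toFun f := ⟨_, _, smul_hom_span_apply_self ha f⟩
  invFun m := (LinearMap.toSpanSingleton A M m).comp (Submodule.span A {a}).subtype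
  map_add' _ _ := rfl
  map_smul' _ _ := rfl
  left_inv f := by
    ext ⟨x, hx⟩
    obtain ⟨r, rfl⟩ := Submodule.mem_span_singleton.1 hx
    show (r * a) • f _ = f _
    rw [mul_smul, smul_hom_span_apply_self ha, ← f.map_smul]
    rfl
  right_inv := by
    rintro ⟨_, m, rfl⟩
    exact Subtype.ext (by simp [hitK, ← mul_smul, ha.eq])

theorem cmult_eq_finrank_hom {a : A} (ha : IsIdempotentElem a) :
    cmult K A a M = Module.finrank K (Submodule.span A {a} →ₗ[A] M) :=
  (homSpanEquivRangeHitK ha).finrank_eq.symm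

end Multiplicity

def LinearEquiv.compRight (K : Type) {A : Type} [Field K] [Ring A] [Algebra K A] (M : Type)
    {N N' : Type} [AddCommGroup M] [Module A M] [AddCommGroup N] [Module K N] [Module A N]
    [IsScalarTower K A N] [AddCommGroup N'] [Module K N'] [Module A N'] [IsScalarTower K A N']
    (g : N ≃ₗ[A] N') : (M →ₗ[A] N) ≃ₗ[K] (M →ₗ[A] N') :=
  .ofLinearMap (f := LinearMap.compRight K g.toLinearMap)
    (g := LinearMap.compRight K g.symm.toLinearMap) (by ext; simp) (by ext; simp)

section Simple

variable {K A : Type} [Field K] [Ring A] [Algebra K A]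
  {S T : Type} [AddCommGroup S] [Module A S] [AddCommGroup T] [Module A T]

theorem rank_hom_eq_add_of_injective {M I : Type} [AddCommGroup M] [Module A M]
    [AddCommGroup I] [Module K I] [Module A I] [IsScalarTower K A I] [Module.Injective A I]
    (P : Submodule A M) :
    Module.rank K (M →ₗ[A] I) = Module.rank K ((M ⧸ P) →ₗ[A] I) + Module.rank K (P →ₗ[A] I) :=
  rank_eq_add_of_exact (LinearMap.lcomp_injective_of_surjective _ P.mkQ_surjective)
    (LinearMap.exact_lcomp_of_exact_of_surjective' I (LinearMap.exact_subtype_mkQ P)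
      P.mkQ_surjective)
    fun g =>
      let ⟨h, hh⟩ := Module.Injective.out P.subtype P.injective_subtype g
      ⟨h, LinearMap.ext hh⟩

variable [Module K T] [IsScalarTower K A T]

theorem rank_hom_topM [IsSimpleModule A T] :
    Module.rank K (topM A S →ₗ[A] T) = Module.rank K (S →ₗ[A] T) := by
  refine (LinearEquiv.ofBijective (LinearMap.lcomp K T (radM A S).mkQ)
    ⟨LinearMap.lcomp_injective_of_surjective _ (radM A S).mkQ_surjective, fun f => ?_⟩).rank_eq
  rcases eq_or_ne f 0 with rfl | hf
  · exact ⟨0, rfl⟩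
  · have hrad : radM A S ≤ LinearMap.ker f :=
      sInf_le (LinearMap.isCoatom_ker_of_surjective (LinearMap.surjective_of_ne_zero hf))
    exact ⟨(radM A S).liftQ f hrad, (radM A S).liftQ_mkQ f hrad⟩

theorem rank_hom_eq_zero_of_not_equiv [IsSimpleModule A S] [IsSimpleModule A T]
    (hST : ¬ Nonempty (S ≃ₗ[A] T)) : Module.rank K (S →ₗ[A] T) = 0 := by
  have : Subsingleton (S →ₗ[A] T) := subsingleton_of_forall_eq 0 fun f =>
    by_contra fun hf => hST ⟨.ofBijective f (LinearMap.bijective_of_ne_zero hf)⟩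
  exact rank_subsingleton' K _

theorem rank_hom_comm [Module K S] [IsScalarTower K A S] [IsSimpleModule A S]
    [IsSimpleModule A T] : Module.rank K (S →ₗ[A] T) = Module.rank K (T →ₗ[A] S) := by
  by_cases hST : Nonempty (S ≃ₗ[A] T)
  · obtain ⟨g⟩ := hST
    rw [(LinearEquiv.congrLeft T K g).rank_eq, (LinearEquiv.compRight K T g.symm).rank_eq]
  · rw [rank_hom_eq_zero_of_not_equiv hST, rank_hom_eq_zero_of_not_equiv fun ⟨g⟩ => hST ⟨g.symm⟩]

theorem range_le_socM [IsSimpleModule A S] (f : S →ₗ[A] T) : LinearMap.range f ≤ socM A T := by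
  rcases eq_or_ne f 0 with rfl | hf
  · simp
  · have : IsSimpleModule A (LinearMap.range f) :=
      .congr (LinearEquiv.ofInjective f (LinearMap.injective_of_ne_zero hf)).symm
    exact le_sSup (isSimpleModule_iff_isAtom.1 this)

theorem rank_hom_socM [IsSimpleModule A S] :
    Module.rank K (S →ₗ[A] socM A T) = Module.rank K (S →ₗ[A] T) :=
  (LinearEquiv.ofBijective (LinearMap.compRight K (socM A T).subtype)
    ⟨fun _ _ h => LinearMap.ext fun s => Subtype.ext (LinearMap.congr_fun h s),
      fun f => ⟨f.codRestrict _ fun s => range_le_socM f ⟨s, rfl⟩, rfl⟩⟩).rank_eq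

end Simple

section InjEnv

variable {K A ι : Type} [Field K] [Ring A] [Algebra K A] {e : ι → A} {j : ι}
  {I : Type} [AddCommGroup I] [Module K I] [Module A I] [IsScalarTower K A I]

theorem IsInjEnv.rank_hom_of_isSimpleModule (hI : IsInjEnv A e j I)
    (hj : IsIdempotentElem (e j)) [IsSimpleModule A (Smod A e j)] (S : Type) [AddCommGroup S]
    [Module K S] [Module A S] [IsScalarTower K A S] [FiniteDimensional K S]
    [IsSimpleModule A S] : Module.rank K (S →ₗ[A] I) = cmult K A (e j) S := by
  obtain ⟨soc⟩ := hI.2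
  rw [← rank_hom_socM, (LinearEquiv.compRight K S soc).rank_eq, rank_hom_comm, rank_hom_topM, Pmod,
    (homSpanEquivRangeHitK hj).rank_eq, cmult, Module.finrank_eq_rank]

theorem IsInjEnv.rank_hom (hI : IsInjEnv A e j I) (hj : IsIdempotentElem (e j))
    [IsSimpleModule A (Smod A e j)] (M : Type) [AddCommGroup M] [Module K M] [Module A M]
    [IsScalarTower K A M] [FiniteDimensional K M] :
    Module.rank K (M →ₗ[A] I) = cmult K A (e j) M := by
  have := hI.1
  induction hn : Module.finrank K M using Nat.strong_induction_on generalizing M with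
  | _ n ih =>
  rcases subsingleton_or_nontrivial M with hM | hM
  · rw [cmult_eq_zero_of_subsingleton, Nat.cast_zero]
    exact rank_subsingleton' K _
  · have : IsArtinian A M := isArtinian_of_tower K inferInstance
    obtain ⟨S, hS, -⟩ := (eq_bot_or_exists_atom_le (⊤ : Submodule A M)).resolve_left top_ne_bot
    have : IsSimpleModule A S := isSimpleModule_iff_isAtom.2 hS
    have hlt : Module.finrank K (M ⧸ S) < n := by
      have hsum := finrank_eq_add_of_exact (f := S.subtype.restrictScalars K)
        (g := S.mkQ.restrictScalars K) S.injective_subtype (LinearMap.exact_subtype_mkQ S)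
        S.mkQ_surjective
      have : Nontrivial S := Submodule.nontrivial_iff_ne_bot.2 hS.1
      have : 0 < Module.finrank K S := Module.finrank_pos
      omega
    rw [rank_hom_eq_add_of_injective S, ih _ hlt (M ⧸ S) rfl,
      hI.rank_hom_of_isSimpleModule hj S, cmult_eq_add hj S, Nat.cast_add, add_comm]

end InjEnv

theorem GoodFilt.sum_eq_sum_cnt_mul {A ι M : Type} [Ring A] [Fintype ι] [AddCommGroup M]
    [Module A M] {F : ι → ModuleCat.{0} A} (fl : GoodFilt A M F)
    (hF : ∀ i i', Nonempty (F i ≃ₗ[A] F i') → i = i') (g : Fin fl.len → ℕ) (c : ι → ℕ)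
    (hg : ∀ t i, Nonempty (subQuot A (fl.D t.castSucc) (fl.D t.succ) ≃ₗ[A] F i) → g t = c i) :
    ∑ t, g t = ∑ i, fl.cnt i * c i := by
  choose idx hidx using fl.quotGood
  have hcnt : ∀ i, fl.cnt i = (Finset.univ.filter fun t => idx t = i).card := by
    intro i
    rw [GoodFilt.cnt, Nat.card_eq_fintype_card, Fintype.card_subtype]
    congr 1
    ext t
    simp only [Finset.mem_filter, Finset.mem_univ, true_and]
    exact ⟨fun ⟨φ⟩ => hF _ _ ⟨(hidx t).some.symm.trans φ⟩, by rintro rfl; exact hidx t⟩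
  calc ∑ t, g t = ∑ t, c (idx t) := Finset.sum_congr rfl fun t _ => hg t _ (hidx t)
    _ = ∑ i, ∑ t with idx t = i, c (idx t) := (Finset.sum_fiberwise _ _ _).symm
    _ = ∑ i, fl.cnt i * c i := by
      refine Finset.sum_congr rfl fun i _ => ?_
      rw [Finset.sum_congr rfl fun t ht => by rw [(Finset.mem_filter.1 ht).2], Finset.sum_const,
        smul_eq_mul, hcnt]

section Standard

variable {K A ι : Type} [Field K] [Ring A] [Algebra K A] {le : ι → ι → Prop} {e : ι → A}

theorem cmult_dmod_eq_zero [FiniteDimensional K A] {i k : ι} (hk : ¬ le k i) :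
    cmult K A (e k) (Dmod K A le e i) = 0 := by
  rw [cmult_eq_zero_iff]
  intro m
  obtain ⟨x, rfl⟩ := Submodule.Quotient.mk_surjective _ m
  rw [← Submodule.Quotient.mk_smul, Submodule.Quotient.mk_eq_zero, delKer, Submodule.mem_sInf]
  intro N hN
  have := (cmult_eq_zero_iff (K := K) (e k) (M := ↥(Pmod A e i) ⧸ N)).1 (hN k hk)
    (Submodule.Quotient.mk x)
  rwa [← Submodule.Quotient.mk_smul, Submodule.Quotient.mk_eq_zero] at this

variable [Fintype ι]

theorem OneQH.le_of_dmod_equiv (h : OneQH K A le e) {i i' : ι}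
    (g : Dmod K A le e i ≃ₗ[A] Dmod K A le e i') : le i i' := by
  have := h.fd
  by_contra hii'
  have := cmult_congr (K := K) (e i) g
  rw [h.delta_mult i i (h.le_refl i), cmult_dmod_eq_zero hii'] at this
  exact one_ne_zero this

theorem OneQH.cmult_pmod (h : OneQH K A le e) (j k : ι) :
    cmult K A (e k) (Pmod A e j) = Set.ncard {i | le j i ∧ le k i} := by
  have := h.fd
  obtain ⟨fl⟩ := h.pgood j
  have hcnt : ∀ i, fl.cnt i = if le j i then 1 else 0 := fun i => by
    split_ifs with hji
    exacts [h.pmult_one j i hji fl, h.pmult_zero j i hji fl]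
  have hdelta : ∀ i, cmult K A (e k) (Dmod K A le e i) = if le k i then 1 else 0 := fun i => by
    split_ifs with hki
    exacts [h.delta_mult i k hki, cmult_dmod_eq_zero hki]
  rw [cmult_eq_sum_of_filtration (h.idem k) fl.D fl.mono fl.first fl.last,
    fl.sum_eq_sum_cnt_mul
      (fun i i' ⟨g⟩ => h.le_antisymm i i' (h.le_of_dmod_equiv g) (h.le_of_dmod_equiv g.symm))
      _ (fun i => cmult K A (e k) (Dmod K A le e i)) fun t i ⟨g⟩ => cmult_congr _ g]
  simp only [hcnt, hdelta, ← ite_and, mul_ite, mul_one, mul_zero]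
  rw [Finset.sum_boole, Set.ncard_eq_toFinset_card']
  simp [and_comm]

end Standard

theorem stmt_2_general {K A ι : Type} [Field K] [Ring A] [Algebra K A]
    [Fintype ι] (le : ι → ι → Prop) (e : ι → A) (h : OneQH K A le e) (j k : ι) :
    (cmult K A (e k) ↥(Pmod A e j) = Set.ncard {i | le j i ∧ le k i}) ∧
    (∀ (Ij : Type) [AddCommGroup Ij] [Module K Ij] [Module A Ij] [IsScalarTower K A Ij],
      IsInjEnv A e j Ij →
        cmult K A (e k) Ij = Set.ncard {i | le j i ∧ le k i}) := by
  refine ⟨h.cmult_pmod j k, fun Ij _ _ _ _ hIj => ?_⟩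
  have := h.fd
  have := h.simple j
  have hdim : Module.finrank K (Pmod A e k →ₗ[A] Ij) = cmult K A (e j) (Pmod A e k) :=
    Module.finrank_eq_of_rank_eq (hIj.rank_hom (h.idem j) _)
  rw [cmult_eq_finrank_hom (h.idem k), ← Pmod, hdim, h.cmult_pmod k j]
  simp only [and_comm]

theorem stmt_2 {K A ι : Type} [Field K] [IsAlgClosed K] [Ring A] [Algebra K A]
    [Fintype ι] (le : ι → ι → Prop) (e : ι → A) (h : OneQH K A le e) (j k : ι) :
    (cmult K A (e k) ↥(Pmod A e j) = Set.ncard {i | le j i ∧ le k i}) ∧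
    (∀ (Ij : Type) [AddCommGroup Ij] [Module K Ij] [Module A Ij] [IsScalarTower K A Ij],
      IsInjEnv A e j Ij →
        cmult K A (e k) Ij = Set.ncard {i | le j i ∧ le k i}) :=
  stmt_2_general le e h j k
end
end

section
/- Let (A,≤) be a 1-quasi-hereditary algebra with smallest element 1 of (Q_0,≤). Then the indecomposable projective module P(1) is isomorphic to the indecomposable injective module I(1). -/
open scoped Classical

noncomputable section

section Stmt3Aux

variable (K A : Type) [Field K] [Ring A] [Algebra K A]

def modK (M : Type) [AddCommGroup M] [Module A M] : Module K M :=
  Module.compHom M (algebraMap K A)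

example (M : Type) [AddCommGroup M] [Module A M] (k : K) (m : M) :
    (modK K A M).toSMul.smul k m = algebraMap K A k • m := rfl

lemma tower_of_smul_def {M : Type} [AddCommGroup M] [Module A M] [Module K M]
    (hK : ∀ (k : K) (m : M), k • m = algebraMap K A k • m) : IsScalarTower K A M :=
  ⟨fun k a m => by rw [Algebra.smul_def, mul_smul, hK]⟩

example (M : Type) [AddCommGroup M] [Module A M] : True := by
  letI : Module K M := modK K A M
  haveI : IsScalarTower K A M := tower_of_smul_def K A (fun _ _ => rfl)
  trivial

def rmulK (a : A) : A →ₗ[K] A where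
  toFun b := b * a
  map_add' x y := add_mul x y a
  map_smul' k x := by simp [smul_mul_assoc]

instance : Module A (A →ₗ[K] K) where
  smul a f := f.comp (rmulK K A a)
  one_smul f := by ext b; show f (b * 1) = f b; rw [mul_one]
  mul_smul a b f := by ext x; show f (x * (a * b)) = f ((x * a) * b); rw [mul_assoc]
  smul_zero a := rfl
  zero_smul f := by ext x; show f (x * 0) = 0; rw [mul_zero, map_zero]
  add_smul a b f := by
    ext x
    show f (x * (a + b)) = f (x * a) + f (x * b)
    rw [mul_add, map_add]
  smul_add a f g := rfl

lemma smul_DA_apply (a : A) (f : A →ₗ[K] K) (x : A) : (a • f) x = f (x * a) := rfl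

instance : IsScalarTower K A (A →ₗ[K] K) := by
  refine ⟨fun k a f => ?_⟩
  ext x
  rw [smul_DA_apply, LinearMap.smul_apply, smul_DA_apply, mul_smul_comm, map_smul]

lemma baer_DA : Module.Baer A (A →ₗ[K] K) := by
  intro I g
  let ι : ↥(I.restrictScalars K) →ₗ[K] ↥I :=
    { toFun := fun x => ⟨x.1, x.2⟩
      map_add' := fun x y => rfl
      map_smul' := fun k x => rfl }
  let ev1 : (A →ₗ[K] K) →ₗ[K] K :=
    { toFun := fun t => t 1
      map_add' := fun s t => rfl
      map_smul' := fun k t => rfl }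
  let φ : ↥(I.restrictScalars K) →ₗ[K] K := ev1 ∘ₗ (g.restrictScalars K) ∘ₗ ι
  obtain ⟨ψ, hψ⟩ := LinearMap.exists_extend φ
  refine ⟨LinearMap.toSpanSingleton A _ ψ, fun x mem => ?_⟩
  ext b
  rw [LinearMap.toSpanSingleton_apply, smul_DA_apply]
  have hbx : b * x ∈ I := I.smul_mem b mem
  have h1 : ψ (b * x) = φ ⟨b * x, hbx⟩ := by
    have h2 := congrArg (fun (t : ↥(I.restrictScalars K) →ₗ[K] K) => t ⟨b * x, hbx⟩) hψ
    simpa using h2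
  rw [h1]
  have hφ : φ ⟨b * x, hbx⟩ = g ⟨b * x, hbx⟩ 1 := rfl
  rw [hφ]
  have h2 : (⟨b * x, hbx⟩ : ↥I) = b • ⟨x, mem⟩ := rfl
  rw [h2, map_smul, smul_DA_apply, one_mul]

lemma exists_atom_le [FiniteDimensional K A] {M : Type} [AddCommGroup M] [Module A M]
    {N : Submodule A M} (hN : N ≠ ⊥) : ∃ L : Submodule A M, IsAtom L ∧ L ≤ N := by
  obtain ⟨m, hmN, hm0⟩ := Submodule.exists_mem_ne_zero_of_ne_bot hN
  set C : Submodule A M := Submodule.span A {m} with hC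
  have hCN : C ≤ N := by rw [hC, Submodule.span_le]; simpa using hmN
  haveI : Module.Finite A ↥C := Module.Finite.iff_fg.mpr (Submodule.fg_span_singleton m)
  letI : Module K ↥C := modK K A ↥C
  haveI : IsScalarTower K A ↥C := tower_of_smul_def K A (fun _ _ => rfl)
  haveI : Module.Finite K ↥C := Module.Finite.trans A ↥C
  haveI : IsArtinian A ↥C := isArtinian_of_tower K inferInstance
  have htb : (⊤ : Submodule A ↥C) ≠ ⊥ := by
    intro hTB
    have hmem : (⟨m, Submodule.mem_span_singleton_self m⟩ : ↥C) ∈ (⊤ : Submodule A ↥C) :=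
      trivial
    rw [hTB, Submodule.mem_bot] at hmem
    exact hm0 (by simpa using congrArg Subtype.val hmem)
  rcases IsAtomic.eq_bot_or_exists_atom_le (⊤ : Submodule A ↥C) with hTB | ⟨L', hL', -⟩
  · exact absurd hTB htb
  refine ⟨L'.map C.subtype, ⟨?_, ?_⟩, le_trans (Submodule.map_subtype_le C L') hCN⟩
  · intro hbot
    apply hL'.1
    apply Submodule.map_injective_of_injective C.injective_subtype
    rw [hbot, Submodule.map_bot]
  · intro b hb
    have hbC : b ≤ C := le_trans hb.le (Submodule.map_subtype_le C L')
    have hmapc : Submodule.map C.subtype (Submodule.comap C.subtype b) = b := by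
      rw [Submodule.map_comap_subtype]
      exact inf_eq_right.mpr hbC
    have hle : Submodule.comap C.subtype b ≤ L' := by
      rw [← Submodule.comap_map_eq_of_injective C.injective_subtype L']
      exact Submodule.comap_mono hb.le
    have hne : Submodule.comap C.subtype b ≠ L' := by
      intro hEq
      apply hb.ne
      rw [← hmapc, hEq]
    rw [← hmapc, hL'.2 _ (lt_of_le_of_ne hle hne), Submodule.map_bot]

lemma socM_le_of_ne_bot [FiniteDimensional K A] {M : Type} [AddCommGroup M] [Module A M]
    (hs : IsAtom (socM A M)) {N : Submodule A M} (hN : N ≠ ⊥) : socM A M ≤ N := by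
  obtain ⟨L, hL, hLN⟩ := exists_atom_le K A hN
  have h1 : L ≤ socM A M := le_sSup hL
  rcases eq_or_lt_of_le h1 with h | h
  · rwa [← h]
  · exact absurd (hs.2 _ h) hL.1

lemma injective_of_socM [FiniteDimensional K A] {M M' : Type} [AddCommGroup M] [Module A M]
    [AddCommGroup M'] [Module A M'] (hs : IsAtom (socM A M)) (f : M →ₗ[A] M')
    (hf : ∀ x ∈ socM A M, f x = 0 → x = 0) : Function.Injective f := by
  rw [← LinearMap.ker_eq_bot]
  by_contra hk
  have h2 := socM_le_of_ne_bot K A hs hk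
  apply hs.1
  rw [eq_bot_iff]
  intro x hx
  have hx0 := hf x hx (LinearMap.mem_ker.mp (h2 hx))
  simp [hx0]

lemma findim_of_socM_simple [FiniteDimensional K A] (M : Type) [AddCommGroup M] [Module A M]
    [Module K M] [IsScalarTower K A M]
    (hsimp : IsSimpleModule A ↥(socM A M)) : FiniteDimensional K M := by
  classical
  have hatom : IsAtom (socM A M) := isSimpleModule_iff_isAtom.mp hsimp
  obtain ⟨s0v, hs0mem, hs0⟩ := Submodule.exists_mem_ne_zero_of_ne_bot hatom.1
  set s0 : ↥(socM A M) := ⟨s0v, hs0mem⟩ with hs0def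
  have hs0' : s0 ≠ 0 := by
    intro hh
    exact hs0 (by simpa [hs0def] using congrArg Subtype.val hh)
  obtain ⟨lam, hlam⟩ : ∃ lam : ↥(socM A M) →ₗ[K] K, lam s0 ≠ 0 := by
    by_contra hcon
    push_neg at hcon
    exact hs0' ((Module.forall_dual_apply_eq_zero_iff K s0).mp fun φ => hcon φ)
  let F : ↥(socM A M) →ₗ[A] (A →ₗ[K] K) :=
    { toFun := fun s =>
        { toFun := fun a => lam (a • s)
          map_add' := fun a b => by
            show lam ((a + b) • s) = lam (a • s) + lam (b • s)
            rw [add_smul, map_add]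
          map_smul' := fun k a => by
            show lam ((k • a) • s) = k • lam (a • s)
            rw [smul_assoc, map_smul] }
      map_add' := fun s t => by
        ext a
        show lam (a • (s + t)) = lam (a • s) + lam (a • t)
        rw [smul_add, map_add]
      map_smul' := fun b s => by
        ext a
        show lam (a • b • s) = lam ((a * b) • s)
        rw [← mul_smul] }
  have hFinj : Function.Injective F := by
    rw [← LinearMap.ker_eq_bot]
    rcases eq_bot_or_eq_top (LinearMap.ker F) with hh | hh
    · exact hh
    · exfalso
      have hFs0 : F s0 = 0 := by rw [← LinearMap.mem_ker, hh]; trivial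
      apply hlam
      have h2 : (F s0) 1 = 0 := by rw [hFs0]; rfl
      have h3 : lam ((1 : A) • s0) = 0 := h2
      rwa [one_smul] at h3
  haveI : Module.Injective A (A →ₗ[K] K) := (baer_DA K A).injective
  obtain ⟨H, hH⟩ := Module.Injective.out (socM A M).subtype
    (Submodule.injective_subtype (socM A M)) F
  have hHinj : Function.Injective H := by
    apply injective_of_socM K A hatom
    intro x hx h0
    have h1 : H ((socM A M).subtype ⟨x, hx⟩) = F ⟨x, hx⟩ := hH ⟨x, hx⟩
    have h2 : F ⟨x, hx⟩ = 0 := by rw [← h1]; exact h0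
    have h3 : (⟨x, hx⟩ : ↥(socM A M)) = 0 := by
      apply hFinj
      rw [h2, map_zero]
    simpa using congrArg Subtype.val h3
  let HK : M →ₗ[K] (A →ₗ[K] K) :=
    { toFun := H
      map_add' := H.map_add
      map_smul' := fun k x => by
        show H (k • x) = k • H x
        rw [← algebraMap_smul A k x, map_smul, algebraMap_smul] }
  exact FiniteDimensional.of_injective HK hHinj

end Stmt3Aux

/-! ### STATEMENT 3
For a 1-quasi-hereditary algebra with smallest element `1` of `(Q₀, ≤)`, the
indecomposable projective `P(1)` is isomorphic to the indecomposable injective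
`I(1)`. -/
theorem stmt_3 {K A ι : Type} [Field K] [IsAlgClosed K] [Ring A] [Algebra K A]
    [Fintype ι] (le : ι → ι → Prop) (e : ι → A) (h : OneQH K A le e)
    (vmin : ι) (hmin : ∀ i, le vmin i) :
    ∀ (I1 : Type) [AddCommGroup I1] [Module A I1],
      IsInjEnv A e vmin I1 → Nonempty (↥(Pmod A e vmin) ≃ₗ[A] I1) := by
  intro I1 _ _ hI1
  haveI hfd : FiniteDimensional K A := h.fd
  letI : Module K I1 := modK K A I1
  haveI : IsScalarTower K A I1 := tower_of_smul_def K A (fun _ _ => rfl)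
  haveI hsimp : IsSimpleModule A (Smod A e vmin) := h.simple vmin
  obtain ⟨σP⟩ := h.soc_p vmin hmin vmin
  obtain ⟨σI⟩ := hI1.2
  haveI : IsSimpleModule A ↥(socM A I1) := IsSimpleModule.congr σI
  haveI : IsSimpleModule A ↥(socM A ↥(Pmod A e vmin)) := IsSimpleModule.congr σP
  have hatomI : IsAtom (socM A I1) := isSimpleModule_iff_isAtom.mp ‹_›
  have hatomP : IsAtom (socM A ↥(Pmod A e vmin)) := isSimpleModule_iff_isAtom.mp ‹_›
  -- finite dimensionality of the shown modules
  haveI hfdP : FiniteDimensional K ↥(Pmod A e vmin) := by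
    let j : ↥(Pmod A e vmin) →ₗ[K] A :=
      { toFun := fun x => x.1
        map_add' := fun x y => rfl
        map_smul' := fun k x => rfl }
    exact FiniteDimensional.of_injective j (fun x y hxy => Subtype.ext hxy)
  haveI hfdI : FiniteDimensional K I1 := findim_of_socM_simple K A I1 ‹_›
  -- the embedding f : P(1) → I1
  let f₀ : ↥(socM A ↥(Pmod A e vmin)) →ₗ[A] I1 :=
    (socM A I1).subtype ∘ₗ (σI.symm.toLinearMap ∘ₗ σP.toLinearMap)
  obtain ⟨f, hf⟩ := hI1.1.out (socM A ↥(Pmod A e vmin)).subtype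
    (Submodule.injective_subtype _) f₀
  have hfinj : Function.Injective f := by
    apply injective_of_socM K A hatomP
    intro x hx h0
    have h1 : f ((socM A ↥(Pmod A e vmin)).subtype ⟨x, hx⟩) = f₀ ⟨x, hx⟩ := hf ⟨x, hx⟩
    have h2 : f₀ ⟨x, hx⟩ = 0 := by rw [← h1]; exact h0
    have h3 : ((σI.symm (σP ⟨x, hx⟩) : ↥(socM A I1)) : I1) = 0 := h2
    have h4 : σI.symm (σP ⟨x, hx⟩) = 0 := Subtype.ext h3
    have h5 : (⟨x, hx⟩ : ↥(socM A ↥(Pmod A e vmin))) = 0 := by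
      have := (LinearEquiv.map_eq_zero_iff σI.symm).mp h4
      exact (LinearEquiv.map_eq_zero_iff σP).mp this
    simpa using congrArg Subtype.val h5
  -- the surjection g : P(1) → I1
  haveI hproj : Module.Projective A ↥(Pmod A e vmin) := by
    refine Module.Projective.of_split (Pmod A e vmin).subtype
      (LinearMap.toSpanSingleton A ↥(Pmod A e vmin)
        ⟨e vmin, Submodule.mem_span_singleton_self _⟩) ?_
    ext x
    rw [LinearMap.comp_apply, LinearMap.id_apply, LinearMap.toSpanSingleton_apply]
    obtain ⟨c, hc⟩ := Submodule.mem_span_singleton.mp x.2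
    show (x : A) * e vmin = (x : A)
    rw [← hc]
    show (c * e vmin) * e vmin = c * e vmin
    rw [mul_assoc, h.idem]
  obtain ⟨τ⟩ := h.top_i vmin hmin vmin I1 hI1
  let u : ↥(Pmod A e vmin) →ₗ[A] topM A I1 :=
    τ.symm.toLinearMap ∘ₗ (radM A ↥(Pmod A e vmin)).mkQ
  have hu : Function.Surjective u :=
    τ.symm.surjective.comp (Submodule.mkQ_surjective _)
  obtain ⟨g, hg⟩ := Module.projective_lifting_property (radM A I1).mkQ u
    (Submodule.mkQ_surjective _)
  have hsup : LinearMap.range g ⊔ radM A I1 = ⊤ := by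
    rw [eq_top_iff]
    intro y _
    obtain ⟨p, hp⟩ := hu ((radM A I1).mkQ y)
    have h1 : (radM A I1).mkQ (y - g p) = 0 := by
      rw [map_sub, ← hp, ← LinearMap.comp_apply, hg, sub_self]
    have h2 : y - g p ∈ radM A I1 := by
      rwa [Submodule.mkQ_apply, Submodule.Quotient.mk_eq_zero] at h1
    exact Submodule.mem_sup.mpr ⟨g p, ⟨p, rfl⟩, y - g p, h2, by abel⟩
  haveI : IsNoetherian A I1 := isNoetherian_of_tower K (inferInstance : IsNoetherian K I1)
  have hgtop : LinearMap.range g = ⊤ := by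
    rcases IsCoatomic.eq_top_or_exists_le_coatom (LinearMap.range g) with hT | ⟨c, hc, hlec⟩
    · exact hT
    · exfalso
      have hrad : radM A I1 ≤ c := sInf_le hc
      have : (⊤ : Submodule A I1) ≤ c := by
        rw [← hsup]
        exact sup_le hlec hrad
      exact hc.1 (top_le_iff.mp this)
  have hgsurj : Function.Surjective g := LinearMap.range_eq_top.mp hgtop
  -- dimension count
  have hd1 : Module.finrank K ↥(Pmod A e vmin) ≤ Module.finrank K I1 :=
    LinearMap.finrank_le_finrank_of_injective
      (f := f.restrictScalars K) hfinj
  have hd2 : Module.finrank K I1 ≤ Module.finrank K ↥(Pmod A e vmin) := by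
    have hr : LinearMap.range (g.restrictScalars K) = ⊤ :=
      LinearMap.range_eq_top.mpr hgsurj
    have := LinearMap.finrank_range_le (g.restrictScalars K)
    rwa [hr, finrank_top] at this
  have hdim : Module.finrank K ↥(Pmod A e vmin) = Module.finrank K I1 :=
    le_antisymm hd1 hd2
  have hfsurj : Function.Surjective f := by
    let fK : ↥(Pmod A e vmin) →ₗ[K] I1 := f.restrictScalars K
    have hfinjK : Function.Injective fK := fun a b hab => hfinj hab
    have hr : LinearMap.range fK = ⊤ := by
      apply Submodule.eq_top_of_finrank_eq
      rw [LinearMap.finrank_range_of_inj hfinjK, hdim]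
    intro y
    obtain ⟨x, hx⟩ := LinearMap.range_eq_top.mp hr y
    exact ⟨x, hx⟩
  exact ⟨LinearEquiv.ofBijective f ⟨hfinj, hfsurj⟩⟩
end
end

section
/- Let (A,≤) be a 1-quasi-hereditary algebra and j ∈ Q_0; for i ≤ j identify Δ(i) with the unique submodule of Δ(j) in Loc_i(Δ(j)) (all standard modules being viewed inside Δ(n)). Then a subset M ⊆ Δ(j) is a submodule if and only if M = Σ_{i∈Λ} Δ(i) for some Λ ⊆ Λ_(j). In particular, Loc_i(Δ(j)) = {Δ(i)} if i ∈ Λ_(j) and Loc_i(Δ(j)) = ∅ if i ∉ Λ_(j), and rad Δ(j) = Σ_{i◁j} Δ(i), the sum over the lower neighbours i of j. -/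
open scoped Classical

noncomputable section

/-! A homomorphism `P(i) → M` is determined by the image of `e_i`, so `Loc_i(M)` consists of the
submodules `A x` with `0 ≠ x ∈ e_i M`. Since `dim e_i Δ(j) = [Δ(j) : S(i)]` is `1` for `i ≤ j`
and `0` otherwise, `Loc_i(Δ(j))` has exactly one member `D i` when `i ≤ j` and none otherwise;
comparing `D i` and `Δ(i)` inside `Δ(n)` shows `D i ≅ Δ(i)`. Every `m ∈ Δ(j)` is `∑ e_i m`,
and each nonzero `e_i m` generates `D i`; this gives the submodules of `Δ(j)`. Finally `e_j Δ(j)`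
is the line through the generator, so `e_j` kills every proper submodule, and the elements killed
by `e_j` are exactly `∑_{i ◁ j} D i`: this is the unique maximal submodule. -/

lemma sInf_setOf_isCoatom_eq {α : Type*} [CompleteLattice α] {a : α}
    (ha : IsGreatest {b | b ≠ ⊤} a) : sInf {b | IsCoatom b} = a := by
  have hcoatoms : {b | IsCoatom b} = {a} := by
    refine Set.eq_singleton_iff_unique_mem.mpr ⟨⟨ha.1, fun b hab => ?_⟩, fun b hb => ?_⟩
    · by_contra hb
      exact hab.not_ge (ha.2 hb)
    · exact ((hb.le_iff.mp (ha.2 hb.1)).resolve_left ha.1).symm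
  rw [hcoatoms, sInf_singleton]

section Pmod

variable {A ι M : Type} [Ring A] [AddCommGroup M] [Module A M] {e : ι → A} {i : ι}

def Pmod.gen (e : ι → A) (i : ι) : Pmod A e i := ⟨e i, Submodule.mem_span_singleton_self _⟩

lemma Pmod.exists_eq_smul_gen (x : Pmod A e i) : ∃ a : A, x = a • Pmod.gen e i := by
  obtain ⟨a, ha⟩ := Submodule.mem_span_singleton.mp x.2
  exact ⟨a, Subtype.ext ha.symm⟩

lemma Pmod.range_eq_span_gen (f : Pmod A e i →ₗ[A] M) :
    LinearMap.range f = Submodule.span A {f (Pmod.gen e i)} := by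
  refine le_antisymm ?_ (Submodule.span_singleton_le_iff_mem _ _ |>.mpr ⟨_, rfl⟩)
  rintro _ ⟨x, rfl⟩
  obtain ⟨a, rfl⟩ := Pmod.exists_eq_smul_gen x
  rw [map_smul]
  exact Submodule.smul_mem _ a (Submodule.mem_span_singleton_self _)

lemma Pmod.idem_smul_apply_gen (he : e i * e i = e i) (f : Pmod A e i →ₗ[A] M) :
    e i • f (Pmod.gen e i) = f (Pmod.gen e i) := by
  rw [← map_smul]
  exact congrArg f (Subtype.ext he)

lemma mem_Loc_iff (he : e i * e i = e i) {N : Submodule A M} :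
    N ∈ Loc A e i M ↔ ∃ m : M, e i • m ≠ 0 ∧ N = Submodule.span A {e i • m} := by
  constructor
  · rintro ⟨f, hf, rfl⟩
    refine ⟨f (Pmod.gen e i), ?_, ?_⟩ <;> rw [Pmod.idem_smul_apply_gen he]
    · intro h0
      apply hf
      rw [← LinearMap.range_eq_bot, Pmod.range_eq_span_gen, h0, Submodule.span_zero_singleton]
    · exact Pmod.range_eq_span_gen f
  · rintro ⟨m, hm, rfl⟩
    let f : Pmod A e i →ₗ[A] M := (LinearMap.toSpanSingleton A M m).comp (Pmod A e i).subtype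
    have hf : f (Pmod.gen e i) = e i • m := rfl
    refine ⟨f, fun h0 => hm ?_, by rw [Pmod.range_eq_span_gen, hf]⟩
    rw [← hf, h0, LinearMap.zero_apply]

lemma Loc_eq_empty (he : e i * e i = e i) (hM : ∀ m : M, e i • m = 0) : Loc A e i M = ∅ :=
  Set.eq_empty_of_forall_notMem fun _ hN => by
    obtain ⟨m, hm, -⟩ := (mem_Loc_iff he).mp hN
    exact hm (hM m)

lemma map_mem_Loc (he : e i * e i = e i) {M' : Type} [AddCommGroup M'] [Module A M']
    {N : Submodule A M} (hN : N ∈ Loc A e i M) {g : M →ₗ[A] M'} (hg : Function.Injective g) :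
    N.map g ∈ Loc A e i M' := by
  obtain ⟨m, hm, rfl⟩ := (mem_Loc_iff he).mp hN
  refine (mem_Loc_iff he).mpr ⟨g m, ?_, ?_⟩ <;> rw [← map_smul]
  · exact (map_ne_zero_iff g hg).mpr hm
  · rw [Submodule.map_span, Set.image_singleton]

end Pmod

section Multiplicity

variable {K A M : Type} [Field K] [Ring A] [Algebra K A] [AddCommGroup M] [Module K M]
  [Module A M] [IsScalarTower K A M] {a : A}

lemma smul_eq_zero_of_cmult_eq_zero [FiniteDimensional K M] (hc : cmult K A a M = 0) (m : M) :
    a • m = 0 := by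
  have hm := LinearMap.mem_range_self (hitK K A a M) m
  rwa [Submodule.finrank_eq_zero.mp hc, Submodule.mem_bot] at hm

lemma exists_smul_ne_zero_of_cmult_eq_one (hc : cmult K A a M = 1) : ∃ m : M, a • m ≠ 0 := by
  by_contra! h0
  have hbot : LinearMap.range (hitK K A a M) = ⊥ :=
    LinearMap.range_eq_bot.mpr (LinearMap.ext h0)
  rw [cmult, hbot, finrank_bot] at hc
  exact zero_ne_one hc

lemma exists_smul_eq_of_cmult_eq_one (hc : cmult K A a M = 1) {m : M} (hm : a • m ≠ 0)
    (m' : M) : ∃ c : K, c • a • m = a • m' := by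
  let x : LinearMap.range (hitK K A a M) := ⟨a • m, m, rfl⟩
  have hx : x ≠ 0 := fun h0 => hm (congrArg Subtype.val h0)
  obtain ⟨c, hcx⟩ := (finrank_eq_one_iff_of_nonzero' x hx).mp hc ⟨a • m', m', rfl⟩
  exact ⟨c, congrArg Subtype.val hcx⟩

lemma span_smul_eq_of_cmult_eq_one (hc : cmult K A a M = 1) {m m' : M} (hm : a • m ≠ 0)
    (hm' : a • m' ≠ 0) : Submodule.span A {a • m} = Submodule.span A {a • m'} := by
  obtain ⟨c, hcm⟩ := exists_smul_eq_of_cmult_eq_one hc hm m'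
  have hc0 : c ≠ 0 := by
    rintro rfl
    rw [zero_smul] at hcm
    exact hm' hcm.symm
  rw [← hcm, ← Submodule.span_singleton_group_smul_eq A (Units.mk0 c hc0) (a • m)]
  rfl

variable {ι : Type} {e : ι → A} {i : ι}

lemma Loc_subsingleton_of_cmult_eq_one (he : e i * e i = e i) (hc : cmult K A (e i) M = 1) :
    (Loc A e i M).Subsingleton := by
  intro N hN N' hN'
  obtain ⟨m, hm, rfl⟩ := (mem_Loc_iff he).mp hN
  obtain ⟨m', hm', rfl⟩ := (mem_Loc_iff he).mp hN'
  exact span_smul_eq_of_cmult_eq_one hc hm hm'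

lemma eq_span_of_mem_Loc (he : e i * e i = e i) (hc : cmult K A (e i) M = 1)
    {N : Submodule A M} (hN : N ∈ Loc A e i M) {m : M} (hm : e i • m ≠ 0) :
    N = Submodule.span A {e i • m} :=
  Loc_subsingleton_of_cmult_eq_one he hc hN ((mem_Loc_iff he).mpr ⟨m, hm, rfl⟩)

lemma smul_mem_of_mem_Loc (he : e i * e i = e i) (hc : cmult K A (e i) M = 1)
    {N : Submodule A M} (hN : N ∈ Loc A e i M) (m : M) : e i • m ∈ N := by
  by_cases hm : e i • m = 0
  · rw [hm]
    exact N.zero_mem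
  · rw [eq_span_of_mem_Loc he hc hN hm]
    exact Submodule.mem_span_singleton_self _

lemma le_of_mem_Loc (he : e i * e i = e i) (hc : cmult K A (e i) M = 1)
    {N : Submodule A M} (hN : N ∈ Loc A e i M) {M' : Submodule A M} {m : M} (hmM' : m ∈ M')
    (hm : e i • m ≠ 0) : N ≤ M' := by
  rw [eq_span_of_mem_Loc he hc hN hm, Submodule.span_singleton_le_iff_mem]
  exact M'.smul_mem _ hmM'

end Multiplicity

section Standard

variable {K A ι : Type} [Field K] [Ring A] [Algebra K A] [Fintype ι] {le : ι → ι → Prop}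
  {e : ι → A}

lemma OneQH.exists_le_nbr (h : OneQH K A le e) {l j : ι} (hlj : le l j) (hne : l ≠ j) :
    ∃ i, le l i ∧ Nbr le i j := by
  let _ : PartialOrder ι :=
    { le := le, le_refl := h.le_refl, le_trans := h.le_trans, le_antisymm := h.le_antisymm }
  obtain ⟨i, hli, hij⟩ := exists_le_covBy_of_lt (lt_of_le_of_ne (α := ι) hlj hne)
  refine ⟨i, hli, ⟨hij.le, hij.ne⟩, fun c hic hcj => ?_⟩
  by_contra! hc
  exact hij.2 (lt_of_le_of_ne hic hc.1.symm) (lt_of_le_of_ne hcj hc.2)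

lemma OneQH.sum_idem_smul (h : OneQH K A le e) {M : Type} [AddCommGroup M] [Module A M]
    (m : M) : ∑ l, e l • m = m := by
  rw [← Finset.sum_smul, h.sum_one, one_smul]

lemma OneQH.finiteDimensional_Pmod_quotient (h : OneQH K A le e) (i : ι)
    (N : Submodule A (Pmod A e i)) : FiniteDimensional K (Pmod A e i ⧸ N) := by
  have := h.fd
  have : FiniteDimensional K (Pmod A e i) :=
    .of_injective ((Pmod A e i).subtype.restrictScalars K) Subtype.coe_injective
  exact .of_surjective (N.mkQ.restrictScalars K) N.mkQ_surjective

/-- `e_l` kills `P(i)/N` for every `N` in the infimum defining the kernel of `P(i) ↠ Δ(i)`. -/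
lemma OneQH.smul_Dmod_eq_zero (h : OneQH K A le e) {i l : ι} (hl : ¬ le l i)
    (x : Dmod K A le e i) : e l • x = 0 := by
  obtain ⟨y, rfl⟩ := Submodule.Quotient.mk_surjective _ x
  rw [← Submodule.Quotient.mk_smul, Submodule.Quotient.mk_eq_zero]
  refine Submodule.mem_sInf.mpr fun N hN => ?_
  have := h.finiteDimensional_Pmod_quotient i N
  have hy := smul_eq_zero_of_cmult_eq_zero (hN l hl) (Submodule.Quotient.mk y)
  rwa [← Submodule.Quotient.mk_smul, Submodule.Quotient.mk_eq_zero] at hy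

lemma OneQH.Loc_Dmod_eq_empty (h : OneQH K A le e) {i j : ι} (hij : ¬ le i j) :
    Loc A e i (Dmod K A le e j) = ∅ :=
  Loc_eq_empty (h.idem i) (h.smul_Dmod_eq_zero hij)

lemma OneQH.Loc_Dmod_subsingleton (h : OneQH K A le e) {i j : ι} (hij : le i j) :
    (Loc A e i (Dmod K A le e j)).Subsingleton :=
  Loc_subsingleton_of_cmult_eq_one (h.idem i) (h.delta_mult j i hij)

lemma OneQH.Loc_Dmod_nonempty (h : OneQH K A le e) {i j : ι} (hij : le i j) :
    (Loc A e i (Dmod K A le e j)).Nonempty := by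
  obtain ⟨m, hm⟩ := exists_smul_ne_zero_of_cmult_eq_one (h.delta_mult j i hij)
  exact ⟨_, (mem_Loc_iff (h.idem i)).mpr ⟨m, hm, rfl⟩⟩

lemma OneQH.top_mem_Loc_Dmod (h : OneQH K A le e) (i : ι) :
    (⊤ : Submodule A (Dmod K A le e i)) ∈ Loc A e i (Dmod K A le e i) := by
  refine ⟨(delKer K A le e i).mkQ, fun h0 => ?_, Submodule.range_mkQ _⟩
  obtain ⟨m, hm⟩ := exists_smul_ne_zero_of_cmult_eq_one (h.delta_mult i i (h.le_refl i))
  obtain ⟨y, rfl⟩ := Submodule.mkQ_surjective _ m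
  rw [h0, LinearMap.zero_apply, smul_zero] at hm
  exact hm rfl

/-- Both `N` and `Δ(i)` embed into `Δ(n)` as members of `Loc_i(Δ(n))`, which has one element. -/
lemma OneQH.nonempty_equiv_of_mem_Loc (h : OneQH K A le e) {i j : ι}
    {N : Submodule A (Dmod K A le e j)} (hN : N ∈ Loc A e i (Dmod K A le e j)) :
    Nonempty (N ≃ₗ[A] Dmod K A le e i) := by
  obtain ⟨n, hn⟩ := h.ex_max
  obtain ⟨g, hg⟩ := h.delta_emb n hn j
  obtain ⟨φ, hφ⟩ := h.delta_emb n hn i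
  have hmap : N.map g = (⊤ : Submodule A (Dmod K A le e i)).map φ :=
    h.Loc_Dmod_subsingleton (hn i) (map_mem_Loc (h.idem i) hN hg)
      (map_mem_Loc (h.idem i) (h.top_mem_Loc_Dmod i) hφ)
  exact ⟨(Submodule.equivMapOfInjective g hg N).trans <| (LinearEquiv.ofEq _ _ hmap).trans <|
    (Submodule.equivMapOfInjective φ hφ ⊤).symm.trans (Submodule.topEquiv)⟩

end Standard

section Submodules

variable {K A ι : Type} [Field K] [Ring A] [Algebra K A] [Fintype ι] {le : ι → ι → Prop}
  {e : ι → A} {j : ι} {D : ι → Submodule A (Dmod K A le e j)}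

lemma OneQH.idem_smul_mem (h : OneQH K A le e)
    (hD : ∀ i, le i j → D i ∈ Loc A e i (Dmod K A le e j)) (l : ι)
    (m : Dmod K A le e j) : e l • m ∈ D l := by
  by_cases hlj : le l j
  · exact smul_mem_of_mem_Loc (h.idem l) (h.delta_mult j l hlj) (hD l hlj) m
  · rw [h.smul_Dmod_eq_zero hlj]
    exact (D l).zero_mem

lemma OneQH.le_of_idem_smul_ne_zero (h : OneQH K A le e)
    (hD : ∀ i, le i j → D i ∈ Loc A e i (Dmod K A le e j)) {l : ι}
    {M : Submodule A (Dmod K A le e j)} {m : Dmod K A le e j} (hmM : m ∈ M)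
    (hm : e l • m ≠ 0) : le l j ∧ D l ≤ M := by
  have hlj : le l j := by
    by_contra hlj
    exact hm (h.smul_Dmod_eq_zero hlj m)
  exact ⟨hlj, le_of_mem_Loc (h.idem l) (h.delta_mult j l hlj) (hD l hlj) hmM hm⟩

lemma OneQH.smul_eq_zero_of_mem_Loc (h : OneQH K A le e) {i l : ι} (hl : ¬ le l i)
    {N : Submodule A (Dmod K A le e j)} (hN : N ∈ Loc A e i (Dmod K A le e j))
    {x : Dmod K A le e j} (hx : x ∈ N) : e l • x = 0 := by
  obtain ⟨σ⟩ := h.nonempty_equiv_of_mem_Loc hN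
  have h0 : e l • (⟨x, hx⟩ : N) = 0 :=
    σ.injective (by rw [map_smul, map_zero, h.smul_Dmod_eq_zero hl])
  simpa using congrArg Subtype.val h0

lemma OneQH.le_of_mem_Loc_of_le (h : OneQH K A le e) {i l : ι} (hli : le l i) (hij : le i j)
    {N N' : Submodule A (Dmod K A le e j)} (hN : N ∈ Loc A e l (Dmod K A le e j))
    (hN' : N' ∈ Loc A e i (Dmod K A le e j)) : N ≤ N' := by
  obtain ⟨σ⟩ := h.nonempty_equiv_of_mem_Loc hN'
  obtain ⟨w, hw⟩ := exists_smul_ne_zero_of_cmult_eq_one (h.delta_mult i l hli)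
  have hx : e l • ((σ.symm w : N') : Dmod K A le e j) ≠ 0 := by
    rw [← Submodule.coe_smul, ne_eq, Submodule.coe_eq_zero, ← σ.map_eq_zero_iff, map_smul,
      σ.apply_symm_apply]
    exact hw
  exact le_of_mem_Loc (h.idem l) (h.delta_mult j l (h.le_trans _ _ _ hli hij)) hN (σ.symm w).2 hx

theorem OneQH.eq_iSup_of_forall_mem_Loc (h : OneQH K A le e)
    (hD : ∀ i, le i j → D i ∈ Loc A e i (Dmod K A le e j))
    (M : Submodule A (Dmod K A le e j)) : M = ⨆ i ∈ {i | le i j ∧ D i ≤ M}, D i := by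
  refine LE.le.antisymm (fun m hm => ?_) (iSup₂_le fun i hi => hi.2)
  rw [← h.sum_idem_smul m]
  refine Submodule.sum_mem _ fun l _ => ?_
  by_cases hlm : e l • m = 0
  · rw [hlm]
    exact Submodule.zero_mem _
  · exact Submodule.mem_iSup_of_mem l <| Submodule.mem_iSup_of_mem
      (h.le_of_idem_smul_ne_zero hD hm hlm) (h.idem_smul_mem hD l m)

end Submodules

section Radical

variable {K A ι : Type} [Field K] [Ring A] [Algebra K A] {le : ι → ι → Prop} {e : ι → A}
  {j : ι}

def Dmod.gen (K A : Type) [Field K] [Ring A] [Algebra K A] (le : ι → ι → Prop) (e : ι → A)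
    (j : ι) : Dmod K A le e j :=
  Submodule.Quotient.mk (Pmod.gen e j)

lemma Dmod.eq_top_of_gen_mem {N : Submodule A (Dmod K A le e j)}
    (hN : Dmod.gen K A le e j ∈ N) : N = ⊤ := by
  refine eq_top_iff.mpr fun z _ => ?_
  obtain ⟨y, rfl⟩ := Submodule.Quotient.mk_surjective _ z
  obtain ⟨a, rfl⟩ := Pmod.exists_eq_smul_gen y
  exact N.smul_mem a hN

variable [Fintype ι]

lemma OneQH.idem_smul_Dmod_gen (h : OneQH K A le e) :
    e j • Dmod.gen K A le e j = Dmod.gen K A le e j :=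
  congrArg Submodule.Quotient.mk (Subtype.ext (h.idem j))

lemma OneQH.Dmod_gen_ne_zero (h : OneQH K A le e) : Dmod.gen K A le e j ≠ 0 := by
  intro h0
  obtain ⟨m, hm⟩ := exists_smul_ne_zero_of_cmult_eq_one (h.delta_mult j j (h.le_refl j))
  have htop : (⊥ : Submodule A (Dmod K A le e j)) = ⊤ :=
    Dmod.eq_top_of_gen_mem (h0 ▸ zero_mem _)
  have hm0 : m = 0 := (Submodule.mem_bot A).mp (htop ▸ Submodule.mem_top)
  exact hm (by rw [hm0, smul_zero])

/-- `e_j Δ(j)` is the line through the generator, which lies in no proper submodule. -/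
lemma OneQH.idem_smul_eq_zero_of_ne_top (h : OneQH K A le e)
    {N : Submodule A (Dmod K A le e j)} (hN : N ≠ ⊤) {m : Dmod K A le e j} (hm : m ∈ N) :
    e j • m = 0 := by
  have hgen : e j • Dmod.gen K A le e j ≠ 0 := by
    rw [h.idem_smul_Dmod_gen]
    exact h.Dmod_gen_ne_zero
  obtain ⟨c, hc⟩ := exists_smul_eq_of_cmult_eq_one (h.delta_mult j j (h.le_refl j)) hgen m
  rw [h.idem_smul_Dmod_gen] at hc
  obtain rfl | hc0 := eq_or_ne c 0
  · rw [← hc, zero_smul]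
  · refine absurd (Dmod.eq_top_of_gen_mem ?_) hN
    rw [← inv_smul_smul₀ hc0 (Dmod.gen K A le e j), hc]
    exact N.smul_of_tower_mem _ (N.smul_mem _ hm)

variable {D : ι → Submodule A (Dmod K A le e j)}

lemma OneQH.mem_iSup_nbr_of_idem_smul_eq_zero (h : OneQH K A le e)
    (hD : ∀ i, le i j → D i ∈ Loc A e i (Dmod K A le e j)) {m : Dmod K A le e j}
    (hm : e j • m = 0) : m ∈ ⨆ i ∈ {i | Nbr le i j}, D i := by
  rw [← h.sum_idem_smul m]
  refine Submodule.sum_mem _ fun l _ => ?_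
  by_cases hlm : e l • m = 0
  · rw [hlm]
    exact Submodule.zero_mem _
  · have hlj := (h.le_of_idem_smul_ne_zero hD Submodule.mem_top hlm).1
    obtain ⟨i, hli, hij⟩ := h.exists_le_nbr hlj (by rintro rfl; exact hlm hm)
    exact Submodule.mem_iSup_of_mem i <| Submodule.mem_iSup_of_mem hij <|
      h.le_of_mem_Loc_of_le hli hij.1.1 (hD l hlj) (hD i hij.1.1) (h.idem_smul_mem hD l m)

lemma OneQH.idem_smul_eq_zero_of_mem_iSup_nbr (h : OneQH K A le e)
    (hD : ∀ i, le i j → D i ∈ Loc A e i (Dmod K A le e j)) {m : Dmod K A le e j}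
    (hm : m ∈ ⨆ i ∈ {i | Nbr le i j}, D i) : e j • m = 0 := by
  rw [iSup_subtype'] at hm
  refine Submodule.iSup_induction _ (motive := fun x => e j • x = 0) hm (fun i x hx => ?_)
    (smul_zero _) (fun x y hx hy => by rw [smul_add, hx, hy, add_zero])
  have hij : le i.1 j := i.2.1.1
  exact h.smul_eq_zero_of_mem_Loc (fun hji => i.2.1.2 (h.le_antisymm _ _ hij hji)) (hD i hij) hx

theorem OneQH.radM_Dmod_eq (h : OneQH K A le e)
    (hD : ∀ i, le i j → D i ∈ Loc A e i (Dmod K A le e j)) :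
    radM A (Dmod K A le e j) = ⨆ i ∈ {i | Nbr le i j}, D i := by
  refine sInf_setOf_isCoatom_eq ⟨fun htop => ?_, fun N hN m hm => ?_⟩
  · refine h.Dmod_gen_ne_zero (j := j) ?_
    rw [← h.idem_smul_Dmod_gen]
    exact h.idem_smul_eq_zero_of_mem_iSup_nbr hD (htop ▸ Submodule.mem_top)
  · exact h.mem_iSup_nbr_of_idem_smul_eq_zero hD (h.idem_smul_eq_zero_of_ne_top hN hm)

end Radical

theorem stmt_6_general {K A ι : Type} [Field K] [Ring A] [Algebra K A]
    [Fintype ι] (le : ι → ι → Prop) (e : ι → A) (h : OneQH K A le e) (j : ι) :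
    (∀ i, ¬ le i j → Loc A e i (Dmod K A le e j) = ∅) ∧
    (∀ i, le i j →
      ∃! N : Submodule A (Dmod K A le e j), N ∈ Loc A e i (Dmod K A le e j)) ∧
    (∀ i, le i j → ∀ N ∈ Loc A e i (Dmod K A le e j),
      Nonempty (↥N ≃ₗ[A] Dmod K A le e i)) ∧
    (∀ D : ι → Submodule A (Dmod K A le e j),
      (∀ i, le i j → D i ∈ Loc A e i (Dmod K A le e j)) →
      (∀ M : Submodule A (Dmod K A le e j),
          ∃ Λ : Set ι, Λ ⊆ {i | le i j} ∧ M = ⨆ i ∈ Λ, D i) ∧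
      radM A (Dmod K A le e j) = ⨆ i ∈ {i | Nbr le i j}, D i) := by
  refine ⟨fun i hij => h.Loc_Dmod_eq_empty hij, fun i hij => ?_,
    fun i _ N hN => h.nonempty_equiv_of_mem_Loc hN,
    fun D hD => ⟨fun M => ⟨_, fun i hi => hi.1, h.eq_iSup_of_forall_mem_Loc hD M⟩,
      h.radM_Dmod_eq hD⟩⟩
  obtain ⟨N, hN⟩ := h.Loc_Dmod_nonempty hij
  exact ⟨N, hN, fun N' hN' => h.Loc_Dmod_subsingleton hij hN' hN⟩

theorem stmt_6 {K A ι : Type} [Field K] [IsAlgClosed K] [Ring A] [Algebra K A]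
    [Fintype ι] (le : ι → ι → Prop) (e : ι → A) (h : OneQH K A le e) (j : ι) :
    (∀ i, ¬ le i j → Loc A e i (Dmod K A le e j) = ∅) ∧
    (∀ i, le i j →
      ∃! N : Submodule A (Dmod K A le e j), N ∈ Loc A e i (Dmod K A le e j)) ∧
    (∀ i, le i j → ∀ N ∈ Loc A e i (Dmod K A le e j),
      Nonempty (↥N ≃ₗ[A] Dmod K A le e i)) ∧
    (∀ D : ι → Submodule A (Dmod K A le e j),
      (∀ i, le i j → D i ∈ Loc A e i (Dmod K A le e j)) →
      (∀ M : Submodule A (Dmod K A le e j),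
          ∃ Λ : Set ι, Λ ⊆ {i | le i j} ∧ M = ⨆ i ∈ Λ, D i) ∧
      radM A (Dmod K A le e j) = ⨆ i ∈ {i | Nbr le i j}, D i) :=
  stmt_6_general le e h j
end
end
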